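/- Let q₀ and q₁ be positive integers. Define N : ℕ → ℝ by: N m = 0 if m is odd; N m = 2(q₀q₁)^{m/2} − 2q₀^{m/2} if m ≡ 2 (mod 4); and N m = 2(q₀q₁)^{m/2} + 2q₀^{m/2} − 4(q₀q₁)^{m/4} if m ≡ 0 (mod 4). Then for every complex u with |u| < (q₀q₁)^{−1/2}, the series ∑_{m≥1} N m · u^m / m converges absolutely and exp(−∑_{m≥1} N m · u^m / m) = (1 + q₀u²)(1 − q₀q₁u²)/(1 − q₀q₁u⁴). -/

import Mathlib

/-!
Write `Q = q₀q₁`, `x = Qu²`, `y = -q₀u²`, `z = Qu⁴`; all three have norm `< 1` once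
`Q‖u‖² < 1`. Termwise,
`N m u^m / m = [2 ∣ m] x^(m/2)/(m/2) + [2 ∣ m] y^(m/2)/(m/2) - [4 ∣ m] z^(m/4)/(m/4)`,
and each summand is the series `∑ w^k/k = -log (1 - w)` spread out onto the multiples of
`d = 2, 4`. Hence the series converges absolutely to `log (1 - z) - log (1 - x) - log (1 - y)`,
and exponentiating gives `(1 - x)(1 - y)/(1 - z)`.
-/

/-- The weighted number of closed paths of length `m` in a Nagao ray of period
two with alternating valencies `q₀ + 1` and `q₁ + 1`. -/
noncomputable def stmt9N (q₀ q₁ : ℕ) (m : ℕ) : ℝ :=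
  if m % 2 = 1 then 0
  else if m % 4 = 2 then 2 * ((q₀ : ℝ) * (q₁ : ℝ)) ^ (m / 2) - 2 * (q₀ : ℝ) ^ (m / 2)
  else 2 * ((q₀ : ℝ) * (q₁ : ℝ)) ^ (m / 2) + 2 * (q₀ : ℝ) ^ (m / 2)
    - 4 * ((q₀ : ℝ) * (q₁ : ℝ)) ^ (m / 4)

open Complex Function

theorem one_sub_ne_zero_of_norm_lt_one {w : ℂ} (hw : ‖w‖ < 1) : 1 - w ≠ 0 :=
  sub_ne_zero.2 fun h => by simp [← h] at hw

theorem summable_norm_pow_div {w : ℂ} (hw : ‖w‖ < 1) : Summable fun k : ℕ => ‖w ^ k / k‖ := by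
  refine .of_nonneg_of_le (fun _ => norm_nonneg _) (fun k => ?_)
    (summable_geometric_of_lt_one (norm_nonneg w) hw)
  rw [norm_div, norm_pow, norm_natCast]
  rcases k.eq_zero_or_pos with rfl | hk
  · simp
  · exact div_le_self (by positivity) (by exact_mod_cast hk)

section Dilation

variable {w : ℂ} {d : ℕ}

theorem hasSum_extend_mul_pow_div (hw : ‖w‖ < 1) (hd : d ≠ 0) :
    HasSum (extend (d * ·) (fun k : ℕ => w ^ k / k) 0) (-log (1 - w)) :=
  (hasSum_extend_zero (mul_right_injective₀ hd)).2 (hasSum_taylorSeries_neg_log hw)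

theorem summable_norm_extend_mul_pow_div (hw : ‖w‖ < 1) (hd : d ≠ 0) :
    Summable fun n => ‖extend (d * ·) (fun k : ℕ => w ^ k / k) 0 n‖ := by
  refine ((summable_extend_zero (mul_right_injective₀ hd)).2 (summable_norm_pow_div hw)).congr
    fun n => ?_
  rw [apply_extend norm]
  congr
  exact funext fun _ => norm_zero.symm

theorem extend_mul_pow_pow_div (a u : ℂ) (hd : d ≠ 0) (n : ℕ) :
    extend (d * ·) (fun k : ℕ => (a * u ^ d) ^ k / k) 0 n
      = if d ∣ n then d * a ^ (n / d) * u ^ n / n else 0 := by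
  split_ifs with h
  · obtain ⟨k, rfl⟩ := h
    rw [(mul_right_injective₀ hd).extend_apply, Nat.mul_div_cancel_left k (Nat.pos_of_ne_zero hd)]
    rcases k.eq_zero_or_pos with rfl | hk
    · simp
    have hd' : (d : ℂ) ≠ 0 := by exact_mod_cast hd
    have hk' : (k : ℂ) ≠ 0 := by exact_mod_cast hk.ne'
    push_cast
    field_simp
    ring
  · exact extend_apply' _ _ _ fun ⟨k, hk⟩ => h ⟨k, hk.symm⟩

end Dilation

theorem stmt9N_eq (q₀ q₁ n : ℕ) : (stmt9N q₀ q₁ n : ℂ) =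
    (if 2 ∣ n then 2 * (((q₀ : ℂ) * q₁) ^ (n / 2) + (-(q₀ : ℂ)) ^ (n / 2)) else 0)
      - (if 4 ∣ n then 4 * ((q₀ : ℂ) * q₁) ^ (n / 4) else 0) := by
  unfold stmt9N
  rcases (show n % 2 = 1 ∨ n % 4 = 2 ∨ n % 4 = 0 by omega) with h | h | h
  · simp [h, show ¬2 ∣ n by omega, show ¬4 ∣ n by omega]
  · have hodd : Odd (n / 2) := ⟨n / 4, by omega⟩
    rw [if_neg (by omega), if_pos h, if_pos (by omega : 2 ∣ n), if_neg (by omega : ¬4 ∣ n),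
      hodd.neg_pow]
    push_cast
    ring
  · have heven : Even (n / 2) := ⟨n / 4, by omega⟩
    rw [if_neg (by omega), if_neg (by omega), if_pos (by omega : 2 ∣ n), if_pos (by omega : 4 ∣ n),
      heven.neg_pow]
    push_cast
    ring

theorem stmt9N_mul_pow_div (q₀ q₁ : ℕ) (u : ℂ) (n : ℕ) :
    (stmt9N q₀ q₁ n : ℂ) * u ^ n / n =
      extend (2 * ·) (fun k : ℕ => ((q₀ : ℂ) * q₁ * u ^ 2) ^ k / k) 0 n
        + extend (2 * ·) (fun k : ℕ => (-(q₀ : ℂ) * u ^ 2) ^ k / k) 0 n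
        - extend (4 * ·) (fun k : ℕ => ((q₀ : ℂ) * q₁ * u ^ 4) ^ k / k) 0 n := by
  simp only [extend_mul_pow_pow_div _ _ two_ne_zero, extend_mul_pow_pow_div _ _ four_ne_zero,
    stmt9N_eq]
  split_ifs <;> push_cast <;> ring

theorem norm_lt_one_of_norm_lt_one_div_sqrt {q₀ q₁ : ℕ} {u : ℂ}
    (hu : ‖u‖ < 1 / √((q₀ : ℝ) * q₁)) :
    ‖(q₀ : ℂ) * q₁ * u ^ 2‖ < 1 ∧ ‖-(q₀ : ℂ) * u ^ 2‖ < 1 ∧ ‖(q₀ : ℂ) * q₁ * u ^ 4‖ < 1 := by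
  have hsqrt : 0 < √((q₀ : ℝ) * q₁) := one_div_pos.1 ((norm_nonneg u).trans_lt hu)
  have hQ : (q₀ : ℝ) * q₁ * ‖u‖ ^ 2 < 1 := by
    rw [lt_div_iff₀ hsqrt] at hu
    have := pow_lt_one₀ (by positivity) hu two_ne_zero
    rwa [mul_pow, Real.sq_sqrt (Real.sqrt_pos.1 hsqrt).le, mul_comm] at this
  have hq : 0 < q₀ * q₁ := by exact_mod_cast Real.sqrt_pos.1 hsqrt
  have hq₁ : (1 : ℝ) ≤ q₁ := Nat.one_le_cast.2 (Nat.pos_of_mul_pos_left hq)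
  have hQ₁ : (1 : ℝ) ≤ q₀ * q₁ := by exact_mod_cast hq
  have hu₁ : ‖u‖ ^ 2 ≤ 1 := (le_mul_of_one_le_left (by positivity) hQ₁).trans hQ.le
  simp only [norm_mul, norm_neg, norm_pow, norm_natCast]
  refine ⟨hQ, ?_, ?_⟩
  · calc (q₀ : ℝ) * ‖u‖ ^ 2 ≤ q₀ * q₁ * ‖u‖ ^ 2 := by
          gcongr; exact le_mul_of_one_le_right (by positivity) hq₁
      _ < 1 := hQ
  · calc (q₀ : ℝ) * q₁ * ‖u‖ ^ 4 = q₀ * q₁ * ‖u‖ ^ 2 * ‖u‖ ^ 2 := by ring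
      _ ≤ q₀ * q₁ * ‖u‖ ^ 2 := mul_le_of_le_one_right (by positivity) hu₁
      _ < 1 := hQ

section Series

variable {q₀ q₁ : ℕ} {u : ℂ}

theorem hasSum_stmt9N_mul_pow_div (hu : ‖u‖ < 1 / √((q₀ : ℝ) * q₁)) :
    HasSum (fun n : ℕ => (stmt9N q₀ q₁ n : ℂ) * u ^ n / n)
      (log (1 - q₀ * q₁ * u ^ 4) - log (1 - q₀ * q₁ * u ^ 2) - log (1 + q₀ * u ^ 2)) := by
  obtain ⟨hx, hy, hz⟩ := norm_lt_one_of_norm_lt_one_div_sqrt hu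
  have hlog : log (1 - q₀ * q₁ * u ^ 4) - log (1 - q₀ * q₁ * u ^ 2) - log (1 + q₀ * u ^ 2) =
      -log (1 - q₀ * q₁ * u ^ 2) + -log (1 - -q₀ * u ^ 2) - -log (1 - q₀ * q₁ * u ^ 4) := by
    simp only [neg_mul, sub_neg_eq_add]
    ring
  rw [hlog]
  exact (((hasSum_extend_mul_pow_div hx two_ne_zero).add
    (hasSum_extend_mul_pow_div hy two_ne_zero)).sub
      (hasSum_extend_mul_pow_div hz four_ne_zero)).congr_fun (stmt9N_mul_pow_div q₀ q₁ u)

theorem summable_norm_stmt9N_mul_pow_div (hu : ‖u‖ < 1 / √((q₀ : ℝ) * q₁)) :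
    Summable fun n : ℕ => ‖(stmt9N q₀ q₁ n : ℂ) * u ^ n / n‖ := by
  obtain ⟨hx, hy, hz⟩ := norm_lt_one_of_norm_lt_one_div_sqrt hu
  refine (((summable_norm_extend_mul_pow_div hx two_ne_zero).add
    (summable_norm_extend_mul_pow_div hy two_ne_zero)).add
      (summable_norm_extend_mul_pow_div hz four_ne_zero)).of_nonneg_of_le
        (fun _ => norm_nonneg _) fun n => ?_
  rw [stmt9N_mul_pow_div]
  exact (norm_sub_le _ _).trans (add_le_add_left (norm_add_le _ _) _)

end Series

theorem stmt9_general (q₀ q₁ : ℕ) (u : ℂ)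
    (hu : ‖u‖ < 1 / Real.sqrt ((q₀ : ℝ) * (q₁ : ℝ))) :
    Summable (fun m : ℕ =>
      ‖(stmt9N q₀ q₁ (m + 1) : ℂ) * u ^ (m + 1) / (m + 1)‖) ∧
    Complex.exp (-(∑' m : ℕ, (stmt9N q₀ q₁ (m + 1) : ℂ) * u ^ (m + 1) / (m + 1)))
      = (1 + (q₀ : ℂ) * u ^ 2) * (1 - (q₀ : ℂ) * (q₁ : ℂ) * u ^ 2)
        / (1 - (q₀ : ℂ) * (q₁ : ℂ) * u ^ 4) := by
  have hsum := (hasSum_nat_add_iff (f := fun n : ℕ => (stmt9N q₀ q₁ n : ℂ) * u ^ n / n) 1).2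
    (by simpa using hasSum_stmt9N_mul_pow_div hu)
  have hnorm := (summable_nat_add_iff 1).2 (summable_norm_stmt9N_mul_pow_div hu)
  push_cast at hsum hnorm
  refine ⟨hnorm, ?_⟩
  obtain ⟨hx, hy, hz⟩ := norm_lt_one_of_norm_lt_one_div_sqrt hu
  have hy' : 1 + (q₀ : ℂ) * u ^ 2 ≠ 0 := by simpa using one_sub_ne_zero_of_norm_lt_one hy
  rw [hsum.tsum_eq, neg_sub, sub_sub_eq_add_sub, exp_sub, exp_add, exp_log hy',
    exp_log (one_sub_ne_zero_of_norm_lt_one hx), exp_log (one_sub_ne_zero_of_norm_lt_one hz)]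

/-- for `|u| < (q₀q₁)^{-1/2}` the series `∑_{m ≥ 1} N_m u^m / m`
converges absolutely and
`exp(-∑_{m ≥ 1} N_m u^m / m) = (1 + q₀u²)(1 - q₀q₁u²)/(1 - q₀q₁u⁴)`. -/
theorem stmt9 (q₀ q₁ : ℕ) (h₀ : 0 < q₀) (h₁ : 0 < q₁) (u : ℂ)
    (hu : ‖u‖ < 1 / Real.sqrt ((q₀ : ℝ) * (q₁ : ℝ))) :
    Summable (fun m : ℕ =>
      ‖(stmt9N q₀ q₁ (m + 1) : ℂ) * u ^ (m + 1) / (m + 1)‖) ∧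
    Complex.exp (-(∑' m : ℕ, (stmt9N q₀ q₁ (m + 1) : ℂ) * u ^ (m + 1) / (m + 1)))
      = (1 + (q₀ : ℂ) * u ^ 2) * (1 - (q₀ : ℂ) * (q₁ : ℂ) * u ^ 2)
        / (1 - (q₀ : ℂ) * (q₁ : ℂ) * u ^ 4) :=
  stmt9_general q₀ q₁ u hu
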